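/- arXiv:2005.07187 — 2 statements merged into one kernel-verified Lean document; each statement's English description precedes it below -/
import Mathlib

section
/- Let L be a labeling of an n-element poset P, and write L_γ = ∂^γ(L). For every integer γ with 0 ≤ γ ≤ n, each of the elements L_γ⁻¹(n−γ+1), L_γ⁻¹(n−γ+2), …, L_γ⁻¹(n) is frozen with respect to L_γ. -/
open scoped Classical

noncomputable section

abbrev Labeling (P : Type*) [Fintype P] : Type _ := P ≃ Fin (Fintype.card P)

variable {P : Type*} [Fintype P] [PartialOrder P]

def IsLinearExt (L : Labeling P) : Prop := ∀ x y : P, x ≤ y → L x ≤ L y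

def lSucc (L : Labeling P) (v : P)
    (h : (Finset.univ.filter fun y => v < y).Nonempty) : P :=
  L.symm (((Finset.univ.filter fun y => v < y).image L).min' (h.image _))

lemma lt_lSucc (L : Labeling P) (v : P)
    (h : (Finset.univ.filter fun y => v < y).Nonempty) : v < lSucc L v h := by
  have hmem := Finset.min'_mem ((Finset.univ.filter fun y => v < y).image L) (h.image _)
  obtain ⟨y, hy, hLy⟩ := Finset.mem_image.mp hmem
  have heq : lSucc L v h = y := by
    unfold lSucc
    rw [← hLy, Equiv.symm_apply_apply]
  rw [heq]
  exact (Finset.mem_filter.mp hy).2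

def promChainFrom (L : Labeling P) (v : P) : List P :=
  if h : (Finset.univ.filter fun y => v < y).Nonempty then
    v :: promChainFrom L (lSucc L v h)
  else [v]
termination_by (Finset.univ.filter fun y => v < y).card
decreasing_by
  apply Finset.card_lt_card
  refine (Finset.ssubset_iff_of_subset ?_).mpr ?_
  · intro z hz
    simp only [Finset.mem_filter, Finset.mem_univ, true_and] at *
    exact lt_trans (lt_lSucc L v h) hz
  · exact ⟨lSucc L v h, by simp [lt_lSucc L v h], by simp⟩

def promote (L : Labeling P) : Labeling P :=
  if h : Nonempty P then
    ((List.formPerm (promChainFrom L (L.symm ⟨0, @Fintype.card_pos P _ h⟩))).trans L).trans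
      (finRotate (Fintype.card P)).symm
  else L

/-- The label of `x` under `L`, as an integer in `{1, …, n}`. -/
def labelOf (L : Labeling P) (x : P) : ℕ := (L x : ℕ) + 1

/-- The largest `a ∈ {0, …, n}` such that for all `j ∈ {n−a+1, …, n}`, the set
`{x ∈ P : j ≤ L(x) ≤ n}` is an upper order ideal of `P`. -/
def frozenA (L : Labeling P) : ℕ :=
  sSup {a : ℕ | a ≤ Fintype.card P ∧
    ∀ j, Fintype.card P - a + 1 ≤ j → j ≤ Fintype.card P →
      IsUpperSet {x : P | j ≤ labelOf L x ∧ labelOf L x ≤ Fintype.card P}}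

/-- `x` is frozen with respect to `L` if `n − a + 1 ≤ L(x) ≤ n`, where `a` is as in `frozenA`. -/
def IsFrozen (L : Labeling P) (x : P) : Prop :=
  Fintype.card P - frozenA L + 1 ≤ labelOf L x

/-- A labeling of an `n`-element poset is tangled if `n ≥ 2` and `∂^{n−2}(L)` is
not a linear extension. -/
def IsTangled (L : Labeling P) : Prop :=
  2 ≤ Fintype.card P ∧ ¬ IsLinearExt (promote^[Fintype.card P - 2] L)

/-- A labeling of an `n`-element poset is `k`-untangled if `n ≥ k + 2` and
`∂^{n−k−2}(L)` is not a linear extension. -/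
def IsUntangled (k : ℕ) (L : Labeling P) : Prop :=
  k + 2 ≤ Fintype.card P ∧ ¬ IsLinearExt (promote^[Fintype.card P - k - 2] L)

/-- The comparability graph of a poset. -/
def compGraph (P : Type*) [PartialOrder P] : SimpleGraph P where
  Adj x y := x ≠ y ∧ (x ≤ y ∨ y ≤ x)
  symm := by
    constructor
    intro x y hxy
    exact ⟨hxy.1.symm, hxy.2.symm⟩
  loopless := by
    constructor
    intro x hx
    exact hx.1 rfl

/-- The standardization of an injective map from a finite type into a linear order:
the unique relabeling by `{1, …, n}` with the same relative order of values. -/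
def standardize {R β : Type*} [Fintype R] [LinearOrder β]
    (f : R → β) (hf : Function.Injective f) : R ≃ Fin (Fintype.card R) :=
  have hcard : (Finset.univ.image f).card = Fintype.card R := by
    rw [Finset.card_image_of_injective _ hf, Finset.card_univ]
  (Equiv.ofBijective (fun x => (⟨f x, by simp⟩ : ↥(Finset.univ.image f)))
    (by
      rw [Fintype.bijective_iff_injective_and_card]
      refine ⟨fun a b hab => hf (congrArg Subtype.val hab), ?_⟩
      rw [Fintype.card_coe, hcard])).trans
    ((Finset.univ.image f).orderIsoOfFin hcard).symm.toEquiv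

/-- The toggle operator `τ_{k+1}`: it swaps the labels `k+1` and `k+2` (i.e. the
`Fin`-labels `k` and `k+1`) unless `L⁻¹(k+1) <_P L⁻¹(k+2)`. -/
def toggle (L : Labeling P) (k : ℕ) : Labeling P :=
  if h : k + 1 < Fintype.card P then
    if L.symm ⟨k, Nat.lt_of_succ_lt h⟩ < L.symm ⟨k + 1, h⟩ then L
    else L.trans (Equiv.swap ⟨k, Nat.lt_of_succ_lt h⟩ ⟨k + 1, h⟩)
  else L

/-- An element `x` is `L`-golden if every element strictly above it has a larger label. -/
def IsGolden (L : Labeling P) (x : P) : Prop := ∀ y : P, x < y → L x < L y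

/-- The largest label `n` of an `n`-element poset, as an element of `Fin n`. -/
def topFin (P : Type*) [Fintype P] [Nonempty P] : Fin (Fintype.card P) :=
  ⟨Fintype.card P - 1, Nat.sub_lt Fintype.card_pos Nat.one_pos⟩

/-!
Under `∂` every label drops by one, except that each non-maximal element of the promotion
chain takes over the label of its `L`-successor, and the maximal one receives `n`. So labels
never drop by more than one, and `x < z` forces `∂L(x) < max(L(x), L(z))`: off the chain `x`
just drops, on it `x` gets the label of its `L`-successor, which is at most `L(z)`. Hence if
the labels `≥ j + 1` of `L` cut out an upper set, the labels `≥ j` of `∂L` do too. The labels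
`≥ n` cut out the empty set, so after `γ` promotions each of the top `γ` labels cuts out an
upper set, i.e. `a ≥ γ` in the definition of frozenness.
-/

lemma List.IsChain.rel_formPerm_apply {α : Type*} [DecidableEq α] {R : α → α → Prop}
    {l : List α} (hl : l.IsChain R) (hnd : l.Nodup) {x : α} (hx : x ∈ l)
    (hlast : x ≠ l.getLast (List.ne_nil_of_mem hx)) : R x (l.formPerm x) := by
  obtain ⟨i, hi, rfl⟩ := List.mem_iff_getElem.mp hx
  have hi' : i + 1 < l.length := by
    by_contra! h
    exact hlast (by rw [List.getLast_eq_getElem]; congr 1; omega)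
  rw [List.formPerm_apply_lt_getElem l hnd i hi']
  exact List.isChain_iff_getElem.mp hl i hi'

lemma Fin.val_neg_one_of_neZero {n : ℕ} [NeZero n] : ((-1 : Fin n) : ℕ) = n - 1 := by
  obtain ⟨m, rfl⟩ := Nat.exists_eq_succ_of_ne_zero (NeZero.ne n)
  simp

def IsLSucc (L : Labeling P) (a b : P) : Prop := a < b ∧ ∀ z, a < z → L b ≤ L z

lemma isLSucc_lSucc (L : Labeling P) (v : P)
    (h : (Finset.univ.filter fun y => v < y).Nonempty) : IsLSucc L v (lSucc L v h) := by
  refine ⟨lt_lSucc L v h, fun z hz => ?_⟩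
  rw [lSucc, Equiv.apply_symm_apply]
  exact Finset.min'_le _ _ (Finset.mem_image_of_mem L (by simp [hz]))

lemma IsLSucc.label_le {L : Labeling P} {a b c : P} (hab : IsLSucc L a b)
    (hbc : IsLSucc L b c) : L b ≤ L c :=
  hab.2 c (hab.1.trans hbc.1)

lemma promChainFrom_eq_cons (L : Labeling P) (v : P) : ∃ t, promChainFrom L v = v :: t := by
  rw [promChainFrom]
  split
  · exact ⟨_, rfl⟩
  · exact ⟨[], rfl⟩

lemma promChainFrom_ne_nil (L : Labeling P) (v : P) : promChainFrom L v ≠ [] := by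
  obtain ⟨t, ht⟩ := promChainFrom_eq_cons L v
  simp [ht]

lemma isChain_promChainFrom (L : Labeling P) (v : P) :
    (promChainFrom L v).IsChain (IsLSucc L) := by
  fun_induction promChainFrom L v with
  | case1 v h ih =>
    obtain ⟨t, ht⟩ := promChainFrom_eq_cons L (lSucc L v h)
    rw [ht] at ih ⊢
    exact List.isChain_cons_cons.mpr ⟨isLSucc_lSucc L v h, ih⟩
  | case2 v h => exact List.isChain_singleton v

lemma isMax_getLast_promChainFrom (L : Labeling P) (v : P) :
    IsMax ((promChainFrom L v).getLast (promChainFrom_ne_nil L v)) := by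
  fun_induction promChainFrom L v with
  | case1 v h ih =>
    have hcons : promChainFrom L v = v :: promChainFrom L (lSucc L v h) := by
      rw [promChainFrom, dif_pos h]
    rwa [List.getLast_congr _ (List.cons_ne_nil _ _) hcons, List.getLast_cons]
  | case2 v h =>
    have hsingle : promChainFrom L v = [v] := by rw [promChainFrom, dif_neg h]
    rw [List.getLast_congr _ (List.cons_ne_nil _ _) hsingle, List.getLast_singleton]
    exact isMax_iff_forall_not_lt.mpr fun z hz => h ⟨z, by simpa using hz⟩

section PromotionChain

variable [Nonempty P]

def promChain (L : Labeling P) : List P := promChainFrom L (L.symm ⟨0, Fintype.card_pos⟩)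

lemma promChain_ne_nil (L : Labeling P) : promChain L ≠ [] := promChainFrom_ne_nil L _

lemma promote_eq (L : Labeling P) :
    promote L = ((promChain L).formPerm.trans L).trans (finRotate (Fintype.card P)).symm :=
  dif_pos ‹_›

lemma promChain_eq_cons (L : Labeling P) :
    ∃ t, promChain L = L.symm ⟨0, Fintype.card_pos⟩ :: t :=
  promChainFrom_eq_cons L _

lemma isChain_promChain (L : Labeling P) : (promChain L).IsChain (IsLSucc L) :=
  isChain_promChainFrom L _

lemma promChain_nodup (L : Labeling P) : (promChain L).Nodup :=
  (List.isChain_iff_pairwise.mp ((isChain_promChain L).imp fun _ _ h => h.1)).imp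
    ne_of_lt

lemma isChain_label_le_promChain (L : Labeling P) :
    (promChain L).IsChain fun a b => L a ≤ L b := by
  have hchain := List.isChain_iff_getElem.mp (isChain_promChain L)
  refine List.isChain_iff_getElem.mpr fun i hi => ?_
  cases i with
  | zero =>
    obtain ⟨t, ht⟩ := promChain_eq_cons L
    simp [ht]
  | succ i => exact (hchain i (by omega)).label_le (hchain (i + 1) hi)

lemma formPerm_promChain_getLast (L : Labeling P) :
    (promChain L).formPerm ((promChain L).getLast (promChain_ne_nil L)) =
      L.symm ⟨0, Fintype.card_pos⟩ := by
  obtain ⟨t, ht⟩ := promChain_eq_cons L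
  rw [List.getLast_congr _ (List.cons_ne_nil _ _) ht, ht, List.formPerm_apply_getLast]

lemma promote_apply_getLast (L : Labeling P) :
    (promote L ((promChain L).getLast (promChain_ne_nil L)) : ℕ) = Fintype.card P - 1 := by
  rw [promote_eq]
  simp [formPerm_promChain_getLast, Fin.val_neg_one_of_neZero]

lemma promote_apply_add_one {L : Labeling P} {x : P}
    (hx : x ≠ (promChain L).getLast (promChain_ne_nil L)) :
    (promote L x : ℕ) + 1 = L ((promChain L).formPerm x) := by
  have hne : L ((promChain L).formPerm x) ≠ 0 := fun h => hx <|
    (promChain L).formPerm.injective <| by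
      rw [formPerm_promChain_getLast, Equiv.eq_symm_apply, h]
      rfl
  rw [promote_eq, Equiv.trans_apply, Equiv.trans_apply, coe_finRotate_symm_of_ne_zero hne]
  have := Fin.pos_iff_ne_zero.mpr hne
  omega

lemma le_promote_apply_add_one (L : Labeling P) (x : P) : (L x : ℕ) ≤ promote L x + 1 := by
  by_cases hx : x = (promChain L).getLast (promChain_ne_nil L)
  · have := (L x).isLt
    rw [hx, promote_apply_getLast] at *
    omega
  rw [promote_apply_add_one hx]
  by_cases hmem : x ∈ promChain L
  · exact (isChain_label_le_promChain L).rel_formPerm_apply (promChain_nodup L) hmem hx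
  · rw [List.formPerm_apply_of_notMem hmem]

lemma promote_apply_add_one_le_max {L : Labeling P} {x z : P} (hxz : x < z) :
    (promote L x : ℕ) + 1 ≤ max (L x : ℕ) (L z) := by
  have hx : x ≠ (promChain L).getLast (promChain_ne_nil L) := by
    rintro rfl
    exact (isMax_getLast_promChainFrom L _).not_lt hxz
  rw [promote_apply_add_one hx]
  by_cases hmem : x ∈ promChain L
  · exact le_max_of_le_right
      (((isChain_promChain L).rel_formPerm_apply (promChain_nodup L) hmem hx).2 z hxz)
  · rw [List.formPerm_apply_of_notMem hmem]
    exact le_max_left _ _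

end PromotionChain

lemma isUpperSet_promote_label_ge {L : Labeling P} {j : ℕ}
    (h : IsUpperSet {x | j + 1 ≤ (L x : ℕ)}) : IsUpperSet {x | j ≤ (promote L x : ℕ)} := by
  intro x z hxz (hx : j ≤ (promote L x : ℕ))
  have : Nonempty P := ⟨x⟩
  rcases hxz.lt_or_eq with hxz | rfl
  · have hmax := promote_apply_add_one_le_max (L := L) hxz
    have hz : j + 1 ≤ (L z : ℕ) :=
      (le_max_iff.mp (show j + 1 ≤ max (L x : ℕ) (L z) by omega)).elim (h hxz.le) id
    have := le_promote_apply_add_one L z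
    change j ≤ (promote L z : ℕ)
    omega
  · exact hx

lemma isUpperSet_promote_iterate_label_ge (L : Labeling P) {γ j : ℕ}
    (hj : Fintype.card P - γ ≤ j) : IsUpperSet {x | j ≤ ((promote^[γ] L) x : ℕ)} := by
  induction γ generalizing j with
  | zero =>
    intro x _ _ (hx : j ≤ (L x : ℕ))
    have := (L x).isLt
    omega
  | succ γ ih =>
    rw [Function.iterate_succ_apply']
    exact isUpperSet_promote_label_ge (ih (by omega))

lemma le_frozenA {L : Labeling P} {a : ℕ} (ha : a ≤ Fintype.card P)
    (h : ∀ j, Fintype.card P - a ≤ j → IsUpperSet {x | j ≤ (L x : ℕ)}) : a ≤ frozenA L := by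
  refine le_csSup ⟨Fintype.card P, fun b hb => hb.1⟩ ⟨ha, fun j hj₁ hj₂ x z hxz hx => ?_⟩
  have hz : j - 1 ≤ (L z : ℕ) := h (j - 1) (by omega) hxz (show j - 1 ≤ (L x : ℕ) by
    have := hx.1; unfold labelOf at this; omega)
  have := (L z).isLt
  constructor <;> unfold labelOf <;> omega

/-- For every `0 ≤ γ ≤ n`, the elements
`L_γ⁻¹(n−γ+1), …, L_γ⁻¹(n)` (i.e. `(∂^γ L)⁻¹ j` for `Fin`-labels `j ≥ n − γ`)
are frozen with respect to `L_γ = ∂^γ(L)`. -/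
theorem top_labels_frozen (L : Labeling P) (γ : ℕ) (hγ : γ ≤ Fintype.card P)
    (j : Fin (Fintype.card P)) (hj : Fintype.card P - γ ≤ (j : ℕ)) :
    IsFrozen (promote^[γ] L) ((promote^[γ] L).symm j) := by
  have hfrozen : γ ≤ frozenA (promote^[γ] L) :=
    le_frozenA hγ fun _ => isUpperSet_promote_iterate_label_ge L
  rw [IsFrozen, labelOf, Equiv.apply_symm_apply]
  omega

end
end

section
/- An n-element poset P admits a tangled labeling if and only if there is some element of P that is strictly greater (in P) than exactly one other element of P. -/
open scoped Classical

noncomputable section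

variable {P : Type*} [Fintype P] [PartialOrder P]

/-!
Labels are `Fin n`-valued, so the paper's label `i` is `i - 1` here.

Promotion freezes labels from the top: if `{x | j + 1 ≤ L x}` is an upper set, so is
`{x | j ≤ ∂L x}`, because `j ≤ ∂L x` forces `j + 1 ≤ L z` for all `z > x`: off the promotion
chain `∂` lowers labels by one, and on it `x` receives the label of its `L`-successor, the
smallest label above `x`. Hence in `M = ∂^{n-2} L` every set `{x | j ≤ M x}` with `j ≥ 2` is an
upper set, and a violation `a ≤ b`, `M b < M a` forces `M a = 1`, `M b = 0`; any `c < b` then has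
label `≤ 1`, so `c = a`.

Conversely, if `y` is the only element below `x`, give `y` the top label and `x` the next one.
A promotion chain starts at label `0` and climbs, so it avoids `x` and `y` as long as their labels
are positive; after `n - 2` promotions `x` has label `0` and `y` label `1`.
-/

lemma finRotate_symm_val_add_one {n : ℕ} [NeZero n] (i : Fin n) :
    ((finRotate n).symm i : ℕ) + 1 = if i = 0 then n else i := by
  split_ifs with hi
  · obtain ⟨m, rfl⟩ := Nat.exists_eq_succ_of_ne_zero (NeZero.ne n)
    simp [hi]
  · have := Fin.val_ne_zero_iff.mpr hi
    rw [coe_finRotate_symm_of_ne_zero hi]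
    omega

lemma lSucc_le (L : Labeling P) {v z : P}
    (h : (Finset.univ.filter fun y => v < y).Nonempty) (hz : v < z) :
    L (lSucc L v h) ≤ L z := by
  rw [lSucc, Equiv.apply_symm_apply]
  exact Finset.min'_le _ _ (Finset.mem_image_of_mem L (by simp [hz]))

lemma self_mem_promChainFrom (L : Labeling P) (v : P) : v ∈ promChainFrom L v := by
  rw [promChainFrom]
  split <;> simp

lemma le_of_mem_promChainFrom (L : Labeling P) {v z : P} (hz : z ∈ promChainFrom L v) :
    v ≤ z := by
  induction v using promChainFrom.induct L with
  | case1 v h ih =>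
    rw [promChainFrom, dif_pos h] at hz
    rcases List.mem_cons.mp hz with rfl | hz
    · exact le_rfl
    · exact (lt_lSucc L v h).le.trans (ih hz)
  | case2 v h =>
    rw [promChainFrom, dif_neg h, List.mem_singleton] at hz
    exact hz.ge

lemma formPerm_promChainFrom (L : Labeling P) {v z : P} (hz : z ∈ promChainFrom L v) :
    (promChainFrom L v).formPerm z =
      if h : (Finset.univ.filter fun y => z < y).Nonempty then lSucc L z h else v := by
  induction v using promChainFrom.induct L with
  | case1 v h ih =>
    rw [promChainFrom, dif_pos h] at hz ⊢
    obtain ⟨t, ht⟩ : ∃ t, promChainFrom L (lSucc L v h) = lSucc L v h :: t := by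
      rw [promChainFrom]; split <;> exact ⟨_, rfl⟩
    rw [ht, List.formPerm_cons_cons, Equiv.Perm.mul_apply, ← ht]
    rcases List.mem_cons.mp hz with rfl | hz
    · have hnot : z ∉ promChainFrom L (lSucc L z h) := fun hmem =>
        (lt_lSucc L z h).not_ge (le_of_mem_promChainFrom L hmem)
      rw [dif_pos h, List.formPerm_apply_of_notMem hnot, Equiv.swap_apply_left]
    · have hsz : lSucc L v h ≤ z := le_of_mem_promChainFrom L hz
      rw [ih hz]
      split
      · next h' =>
        have hzs := lt_lSucc L z h'
        exact Equiv.swap_apply_of_ne_of_ne ((lt_lSucc L v h).trans_le hsz |>.trans hzs).ne'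
          (hsz.trans_lt hzs).ne'
      · exact Equiv.swap_apply_right v _
  | case2 v h =>
    rw [promChainFrom, dif_neg h] at hz ⊢
    rw [List.mem_singleton.mp hz, dif_neg h, List.formPerm_singleton, Equiv.Perm.one_apply]

section Promotion

variable [Nonempty P]

lemma promote_apply (L : Labeling P) (z : P) :
    promote L z = (finRotate (Fintype.card P)).symm (L ((promChain L).formPerm z)) := by
  rw [promote, dif_pos ‹Nonempty P›]
  rfl

lemma symm_zero_le_of_mem_promChain (L : Labeling P) {z : P} (hz : z ∈ promChain L) :
    L.symm 0 ≤ z :=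
  le_of_mem_promChainFrom L hz

lemma promote_val_add_one_of_not_mem (L : Labeling P) {z : P} (hz : z ∉ promChain L) :
    (promote L z : ℕ) + 1 = L z := by
  have hne : L z ≠ 0 := fun h0 => hz <| by
    rw [← L.symm_apply_eq.mpr h0.symm]
    exact self_mem_promChainFrom L _
  rw [promote_apply, List.formPerm_apply_of_notMem hz, finRotate_symm_val_add_one, if_neg hne]

lemma promote_val_add_one_of_mem (L : Labeling P) {z : P} (hz : z ∈ promChain L)
    (h : (Finset.univ.filter fun y => z < y).Nonempty) :
    (promote L z : ℕ) + 1 = L (lSucc L z h) := by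
  have hne : L (lSucc L z h) ≠ 0 := fun h0 => by
    have hstart := symm_zero_le_of_mem_promChain L hz
    rw [L.symm_apply_eq.mpr h0.symm] at hstart
    exact (lt_lSucc L z h).not_ge hstart
  rw [promote_apply, promChain, formPerm_promChainFrom L hz, dif_pos h,
    finRotate_symm_val_add_one, if_neg hne]

lemma promote_val_add_one_of_mem_of_not_nonempty (L : Labeling P) {z : P}
    (hz : z ∈ promChain L) (h : ¬ (Finset.univ.filter fun y => z < y).Nonempty) :
    (promote L z : ℕ) + 1 = Fintype.card P := by
  rw [promote_apply, promChain, formPerm_promChainFrom L hz, dif_neg h, Equiv.apply_symm_apply,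
    finRotate_symm_val_add_one]
  exact if_pos rfl

lemma succ_le_of_lt_of_le_promote (M : Labeling P) {j : ℕ} {x z : P}
    (hU : IsUpperSet {x : P | j + 1 ≤ (M x : ℕ)}) (hx : j ≤ (promote M x : ℕ)) (hxz : x < z) :
    j + 1 ≤ (M z : ℕ) := by
  by_cases hxC : x ∈ promChain M
  · have hfil : (Finset.univ.filter fun y => x < y).Nonempty := ⟨z, by simp [hxz]⟩
    have := promote_val_add_one_of_mem M hxC hfil
    have := lSucc_le M hfil hxz
    omega
  · have := promote_val_add_one_of_not_mem M hxC
    exact hU hxz.le (show j + 1 ≤ (M x : ℕ) by omega)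

end Promotion

lemma isUpperSet_promote (M : Labeling P) {j : ℕ}
    (hU : IsUpperSet {x : P | j + 1 ≤ (M x : ℕ)}) :
    IsUpperSet {x : P | j ≤ (promote M x : ℕ)} := by
  intro x y hxy hx
  have : Nonempty P := ⟨x⟩
  simp only [Set.mem_ofPred_eq] at hx ⊢
  obtain rfl | hlt := hxy.eq_or_lt
  · exact hx
  by_cases hyC : y ∈ promChain M
  · by_cases hfil : (Finset.univ.filter fun w => y < w).Nonempty
    · have := promote_val_add_one_of_mem M hyC hfil
      have := succ_le_of_lt_of_le_promote M hU hx (hlt.trans (lt_lSucc M y hfil))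
      omega
    · have := promote_val_add_one_of_mem_of_not_nonempty M hyC hfil
      have := (promote M x).isLt
      omega
  · have := promote_val_add_one_of_not_mem M hyC
    have := succ_le_of_lt_of_le_promote M hU hx hlt
    omega

lemma isUpperSet_iterate_promote (L : Labeling P) {k j : ℕ} (hj : Fintype.card P ≤ j + k) :
    IsUpperSet {x : P | j ≤ ((promote^[k] L) x : ℕ)} := by
  induction k generalizing j with
  | zero =>
    intro x _ _ hx
    have := (L x).isLt
    simp only [Set.mem_ofPred_eq, Function.iterate_zero_apply] at hx
    omega
  | succ k ih =>
    rw [Function.iterate_succ_apply']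
    exact isUpperSet_promote _ (ih (by omega))

/-- Such `w` never meets a promotion chain, whose elements all lie above the element labelled
`0`. -/
lemma iterate_promote_val_of_le (L : Labeling P) {x : P} {k : ℕ}
    (hx : ∀ w ≤ x, k ≤ (L w : ℕ)) : ∀ w ≤ x, ((promote^[k] L) w : ℕ) + k = L w := by
  induction k with
  | zero => simp
  | succ k ih =>
    intro w hw
    have : Nonempty P := ⟨x⟩
    have hw_notMem : w ∉ promChain (promote^[k] L) := fun hmem => by
      have hstart := symm_zero_le_of_mem_promChain _ hmem
      have := hx _ (hstart.trans hw)
      have := ih (fun u hu => by have := hx u hu; omega) _ (hstart.trans hw)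
      simp only [Equiv.apply_symm_apply, Fin.val_zero] at this
      omega
    have := promote_val_add_one_of_not_mem _ hw_notMem
    have := ih (fun u hu => by have := hx u hu; omega) w hw
    rw [Function.iterate_succ_apply']
    omega

lemma Equiv.exists_apply_eq_apply_eq {α β : Type*} [DecidableEq β] (e : α ≃ β)
    {a b : α} (hab : a ≠ b) {i j : β} (hij : i ≠ j) : ∃ f : α ≃ β, f a = i ∧ f b = j := by
  set e₁ := e.trans (Equiv.swap (e a) i)
  have he₁ : e₁ a = i := by simp [e₁]
  refine ⟨e₁.trans (Equiv.swap (e₁ b) j), ?_, by simp⟩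
  rw [Equiv.trans_apply, he₁]
  exact Equiv.swap_apply_of_ne_of_ne (he₁ ▸ e₁.injective.ne hab) hij

lemma exists_unique_lt_of_not_isLinearExt (M : Labeling P)
    (hM : ∀ j, 2 ≤ j → IsUpperSet {x : P | j ≤ (M x : ℕ)}) (hlin : ¬ IsLinearExt M) :
    ∃ x : P, ∃! y : P, y < x := by
  have hle : ∀ {c b : P}, c ≤ b → (M c : ℕ) ≤ 1 ∨ (M c : ℕ) ≤ M b := fun {c b} hcb => by
    by_contra! h
    exact h.2.not_ge (hM _ (by omega) hcb (le_refl (M c : ℕ)))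
  obtain ⟨a, b, hab, hba⟩ : ∃ a b : P, a ≤ b ∧ (M b : ℕ) < M a := by
    simpa [IsLinearExt] using hlin
  have ha : (M a : ℕ) = 1 := by have := hle hab; omega
  refine ⟨b, a, hab.lt_of_ne (by rintro rfl; omega), fun c hcb => M.injective (Fin.ext ?_)⟩
  have hc := hle hcb.le
  have : (M c : ℕ) ≠ M b := fun h => hcb.ne (M.injective (Fin.ext h))
  omega

/-- `P` admits a tangled labeling if and only if some element of `P`
is strictly greater than exactly one other element of `P`. -/
theorem tangled_exists_iff :
    (∃ L : Labeling P, IsTangled L) ↔ ∃ x : P, ∃! y : P, y < x := by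
  constructor
  · rintro ⟨L, hn, hL⟩
    exact exists_unique_lt_of_not_isLinearExt _
      (fun j hj => isUpperSet_iterate_promote L (by omega)) hL
  · rintro ⟨x, y, hyx, hy⟩
    have hn : 2 ≤ Fintype.card P := Fintype.one_lt_card_iff.mpr ⟨y, x, hyx.ne⟩
    obtain ⟨L, hLx, hLy⟩ := (Fintype.equivFin P).exists_apply_eq_apply_eq hyx.ne'
      (i := ⟨Fintype.card P - 2, by omega⟩) (j := ⟨Fintype.card P - 1, by omega⟩)
      (by simp only [ne_eq, Fin.mk.injEq]; omega)
    have hdown : ∀ w ≤ x, w = x ∨ w = y := fun w hw => hw.eq_or_lt.imp_right (hy w)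
    have hiter := iterate_promote_val_of_le L (x := x) (k := Fintype.card P - 2) fun w hw => by
      rcases hdown w hw with rfl | rfl <;> simp only [hLx, hLy] <;> omega
    refine ⟨L, hn, fun hlin => ?_⟩
    have hle := Fin.le_def.mp (hlin y x hyx.le)
    have hx' := hiter x le_rfl
    have hy' := hiter y hyx.le
    simp only [hLx] at hx'
    simp only [hLy] at hy'
    omega

end
end
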